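/- arXiv:1505.05071 — 8 statements merged into one kernel-verified Lean document; each statement's English description precedes it below -/
import Mathlib

section
/- Let m ≥ 2 be an integer, c > 0 an integer, and a ≥ 1 an integer. Define R = ⌈(m/a)·⌈(m+c)/a⌉ + c/a⌉ (ceilings of rationals). Then the 2-coloring of {1, ..., R−1} that colors {1, ..., ⌈(m+c)/a⌉ − 1} red and {⌈(m+c)/a⌉, ..., R−1} blue admits no monochromatic solution to x_1 + x_2 + ... + x_m + c = a·x_0 with all variables in {1, ..., R−1}. -/
/-!
Each colour class fails for the same reason: its smallest element `lo` makes the left-hand side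
at least `m·lo + c`, while its largest element `hi` keeps `a·x₀ ≤ a·hi`. For the red class
(`lo = 1`, `hi = B - 1`) and the blue class (`lo = B`, `hi = R - 1`) the ceilings defining
`B = ⌈(m + c)/a⌉` and `R = ⌈(m·B + c)/a⌉` are exactly what makes `a·hi < m·lo + c`.
-/

theorem mul_ceil_div_sub_one_lt {K : Type*} [Field K] [LinearOrder K] [IsStrictOrderedRing K]
    [FloorRing K] (q : K) {a : K} (ha : 0 < a) : a * (⌈q / a⌉ - 1) < q :=
  calc a * (⌈q / a⌉ - 1) < a * (q / a) := by
        gcongr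
        linarith [Int.ceil_lt_add_one (q / a)]
    _ = q := mul_div_cancel₀ q ha.ne'

theorem sum_add_ne_mul_of_lt {ι : Type*} [Fintype ι] (x : ι → ℤ) {x0 lo hi c a : ℤ}
    (ha : 0 ≤ a) (hlo : ∀ i, lo ≤ x i) (hx0 : x0 ≤ hi)
    (hlt : a * hi < Fintype.card ι * lo + c) : (∑ i, x i) + c ≠ a * x0 := by
  have hsum : Fintype.card ι * lo ≤ ∑ i, x i := by
    simpa using Finset.card_nsmul_le_sum Finset.univ x lo fun i _ => hlo i
  have hx0a : a * x0 ≤ a * hi := mul_le_mul_of_nonneg_left hx0 ha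
  omega

theorem stmt1_general (m c a : ℤ) (hm : 2 ≤ m) (ha : 1 ≤ a) :
    ¬ ∃ (x : Fin m.toNat → ℤ) (x0 : ℤ),
      (∀ i, x i ∈ Finset.Icc 1 (⌈((m : ℚ) * ⌈((m : ℚ) + c) / a⌉ + c) / a⌉ - 1)) ∧
      x0 ∈ Finset.Icc 1 (⌈((m : ℚ) * ⌈((m : ℚ) + c) / a⌉ + c) / a⌉ - 1) ∧
      ((∀ i, x i < ⌈((m : ℚ) + c) / a⌉) ∧ x0 < ⌈((m : ℚ) + c) / a⌉ ∨
       (∀ i, ⌈((m : ℚ) + c) / a⌉ ≤ x i) ∧ ⌈((m : ℚ) + c) / a⌉ ≤ x0) ∧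
      (∑ i, x i) + c = a * x0 := by
  rintro ⟨x, x0, hx, hx0, hcolour, heq⟩
  set B : ℤ := ⌈((m : ℚ) + c) / a⌉
  have ha' : (0 : ℚ) < a := by exact_mod_cast ha
  have hcard : (Fintype.card (Fin m.toNat) : ℤ) = m := by rw [Fintype.card_fin]; omega
  have hB : a * (B - 1) < m + c := by
    have : (a : ℚ) * (B - 1) < m + c := mul_ceil_div_sub_one_lt _ ha'
    exact_mod_cast this
  have hR : a * (⌈((m : ℚ) * B + c) / a⌉ - 1) < m * B + c := by
    exact_mod_cast mul_ceil_div_sub_one_lt ((m : ℚ) * B + c) ha'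
  rcases hcolour with ⟨-, hx0_red⟩ | ⟨hx_blue, -⟩
  · refine sum_add_ne_mul_of_lt x (by omega) (fun i => (Finset.mem_Icc.mp (hx i)).1)
      (Int.le_sub_one_of_lt hx0_red) ?_ heq
    rwa [hcard, mul_one]
  · refine sum_add_ne_mul_of_lt x (by omega) hx_blue (Finset.mem_Icc.mp hx0).2 ?_ heq
    rwa [hcard]

/-- lower-bound coloring for `x_1 + ... + x_m + c = a·x_0`:
with `B = ⌈(m+c)/a⌉` and `R = ⌈(m·B + c)/a⌉`, coloring `{1,...,B-1}` red and
`{B,...,R-1}` blue admits no monochromatic solution in `{1,...,R-1}`. -/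
theorem stmt1 (m c a : ℤ) (hm : 2 ≤ m) (hc : 0 < c) (ha : 1 ≤ a) :
    ¬ ∃ (x : Fin m.toNat → ℤ) (x0 : ℤ),
      (∀ i, x i ∈ Finset.Icc 1 (⌈((m : ℚ) * ⌈((m : ℚ) + c) / a⌉ + c) / a⌉ - 1)) ∧
      x0 ∈ Finset.Icc 1 (⌈((m : ℚ) * ⌈((m : ℚ) + c) / a⌉ + c) / a⌉ - 1) ∧
      ((∀ i, x i < ⌈((m : ℚ) + c) / a⌉) ∧ x0 < ⌈((m : ℚ) + c) / a⌉ ∨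
       (∀ i, ⌈((m : ℚ) + c) / a⌉ ≤ x i) ∧ ⌈((m : ℚ) + c) / a⌉ ≤ x0) ∧
      (∑ i, x i) + c = a * x0 :=
  stmt1_general m c a hm ha
end

section
/- For every integer c ≥ 1, every 2-coloring of {1, 2, ..., c+1} admits a monochromatic solution to x_1 + x_2 + c = 2·x_0. In particular R(2,c,2) ≤ c+1. -/
/-! For `c = 2k`, the three triples `(1, 1, k+1)`, `(1, 2k+1, 2k+1)` and `(k+1, k+1, 2k+1)` solve
`x₁ + x₂ + c = 2x₀`, and together they cover every pair of the three points `1, k+1, 2k+1`.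
Two of these points share a colour, so one of the triples is monochromatic. -/

lemma Fin.two_pigeonhole (a b c : Fin 2) : a = b ∨ a = c ∨ b = c := by
  omega

theorem stmt4_general (c : ℕ) (hce : Even c) (Δ : ℕ → Fin 2) :
    ∃ x1 x2 x0 : ℕ, x1 ∈ Finset.Icc 1 (c + 1) ∧ x2 ∈ Finset.Icc 1 (c + 1) ∧
      x0 ∈ Finset.Icc 1 (c + 1) ∧ Δ x1 = Δ x0 ∧ Δ x2 = Δ x0 ∧
      x1 + x2 + c = 2 * x0 := by
  obtain ⟨k, rfl⟩ := hce
  simp only [Finset.mem_Icc]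
  rcases Fin.two_pigeonhole (Δ 1) (Δ (k + 1)) (Δ (k + k + 1)) with h | h | h
  · exact ⟨1, 1, k + 1, by omega, by omega, by omega, h, h, by omega⟩
  · exact ⟨1, k + k + 1, k + k + 1, by omega, by omega, by omega, h, rfl, by omega⟩
  · exact ⟨k + 1, k + 1, k + k + 1, by omega, by omega, by omega, h, h, by omega⟩

/-- for every integer `c ≥ 1` (with `c` even, so that the Rado
number is finite), every 2-coloring of `{1,...,c+1}` admits a monochromatic
solution to `x_1 + x_2 + c = 2·x_0`; i.e. `R(2,c,2) ≤ c+1`. -/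
theorem stmt4 (c : ℕ) (hc : 1 ≤ c) (hce : Even c) (Δ : ℕ → Fin 2) :
    ∃ x1 x2 x0 : ℕ, x1 ∈ Finset.Icc 1 (c + 1) ∧ x2 ∈ Finset.Icc 1 (c + 1) ∧
      x0 ∈ Finset.Icc 1 (c + 1) ∧ Δ x1 = Δ x0 ∧ Δ x2 = Δ x0 ∧
      x1 + x2 + c = 2 * x0 :=
  stmt4_general c hce Δ
end

section
/- Every 2-coloring of {1, 2, ..., 7} admits a monochromatic solution to x_1 + x_2 + x_3 + x_4 + 2 = 2·x_0, and there is a 2-coloring of {1,...,6} admitting none. That is, R(4,2,2) = 7. -/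
/-!
On `{1, …, 7}` the solutions `(1,1,1,1; 3)` and `(3,3,3,3; 7)` force `1` and `7` to share the
colour opposite to `3`, and `(1,1,1,5; 5)` gives `5` the other colour than `1`. Then `2` has no
admissible colour: with `1` it completes `(1,2,2,7; 7)`, with `5` it completes `(2,2,2,2; 5)`.

On `{1, …, 6}` colour `{1, 2}` against `{3, …, 6}`. Every solution has `2 x₀ ≥ 6`, so `x₀ ≥ 3`,
and a monochromatic one then has all `xᵢ ≥ 3`, whence `2 x₀ ≥ 14`, i.e. `x₀ ≥ 7`.
-/

open Finset

def HasMonoSolution {C : Type*} (Δ : ℕ → C) (N : ℕ) : Prop :=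
  ∃ (x : Fin 4 → ℕ) (x0 : ℕ), (∀ i, x i ∈ Icc 1 N) ∧ x0 ∈ Icc 1 N ∧
    (∀ i, Δ (x i) = Δ x0) ∧ (∑ i, x i) + 2 = 2 * x0

theorem HasMonoSolution.of_tuple {C : Type*} {Δ : ℕ → C} {N : ℕ} (a b c d e : ℕ)
    (hmem : {a, b, c, d, e} ⊆ Icc 1 N) (hsum : a + b + c + d + 2 = 2 * e)
    (hΔ : ∀ y ∈ ({a, b, c, d} : Finset ℕ), Δ y = Δ e) : HasMonoSolution Δ N := by
  simp only [insert_subset_iff, singleton_subset_iff] at hmem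
  simp only [mem_insert, mem_singleton, forall_eq_or_imp, forall_eq] at hΔ
  refine ⟨![a, b, c, d], e, ?_, hmem.2.2.2.2, ?_, ?_⟩
  · intro i; fin_cases i <;> simp [hmem]
  · intro i; fin_cases i <;> simp [hΔ]
  · simpa [Fin.sum_univ_four] using hsum

theorem hasMonoSolution_seven (Δ : ℕ → Fin 2) : HasMonoSolution Δ 7 := by
  by_contra h
  have h13 : Δ 1 ≠ Δ 3 := fun e => h (.of_tuple 1 1 1 1 3 (by decide) rfl (by simp [e]))
  have h37 : Δ 3 ≠ Δ 7 := fun e => h (.of_tuple 3 3 3 3 7 (by decide) rfl (by simp [e]))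
  have h15 : Δ 1 ≠ Δ 5 := fun e => h (.of_tuple 1 1 1 5 5 (by decide) rfl (by simp [e]))
  have h1277 : ¬ (Δ 1 = Δ 7 ∧ Δ 2 = Δ 7) := fun e =>
    h (.of_tuple 1 2 2 7 7 (by decide) rfl (by simp [e]))
  have h25 : Δ 2 ≠ Δ 5 := fun e => h (.of_tuple 2 2 2 2 5 (by decide) rfl (by simp [e]))
  omega

theorem not_hasMonoSolution_six :
    ¬ HasMonoSolution (fun n => if n ≤ 2 then (0 : Fin 2) else 1) 6 := by
  rintro ⟨x, x0, hx, hx0, hΔ, hsum⟩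
  simp only [mem_Icc] at hx hx0
  rw [Fin.sum_univ_four] at hsum
  have hx0_ge : 3 ≤ x0 := by
    have := hx 0; have := hx 1; have := hx 2; have := hx 3
    omega
  have hx_ge (i : Fin 4) : 3 ≤ x i := by
    have := hΔ i
    simp only [show ¬ x0 ≤ 2 by omega, if_false] at this
    split_ifs at this <;> omega
  have := hx_ge 0; have := hx_ge 1; have := hx_ge 2; have := hx_ge 3
  omega

/-- R(4,2,2) = 7. -/
theorem stmt7 :
    (∀ Δ : ℕ → Fin 2, ∃ (x : Fin 4 → ℕ) (x0 : ℕ),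
        (∀ i, x i ∈ Finset.Icc 1 7) ∧ x0 ∈ Finset.Icc 1 7 ∧
        (∀ i, Δ (x i) = Δ x0) ∧ (∑ i, x i) + 2 = 2 * x0) ∧
    (∃ Δ : ℕ → Fin 2, ¬ ∃ (x : Fin 4 → ℕ) (x0 : ℕ),
        (∀ i, x i ∈ Finset.Icc 1 (7 - 1)) ∧ x0 ∈ Finset.Icc 1 (7 - 1) ∧
        (∀ i, Δ (x i) = Δ x0) ∧ (∑ i, x i) + 2 = 2 * x0) :=
  ⟨hasMonoSolution_seven, fun n => if n ≤ 2 then 0 else 1, not_hasMonoSolution_six⟩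
end

section
/- Every 2-coloring of {1, ..., 8} admits a monochromatic solution to x_1 + x_2 + x_3 + x_4 + x_5 + 1 = 2·x_0. That is, R(5,1,2) ≤ 8. -/
/-!
Under a 2-coloring, the solutions `(1,1,1,1,1; 3)` and `(3,3,3,3,3; 8)` force `1` and `8` to share a
color that `3` does not have. Then `(1,1,1,6,6; 8)`, `(1,1,1,4,8; 8)` and `(1,2,2,2,8; 8)` force
`6`, `4` and `2` into the color of `3`, where `(2,2,2,2,3; 6)` is monochromatic.
-/

lemma fin_two_eq_of_ne_of_ne {a b c : Fin 2} (hab : a ≠ b) (hbc : b ≠ c) : a = c := by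
  omega

lemma exists_mono_solution_of_five (Δ : ℕ → Fin 2) (a b c d e f : ℕ)
    (hrange : ∀ y ∈ [a, b, c, d, e, f], y ∈ Finset.Icc 1 8)
    (hcolor : ∀ y ∈ [a, b, c, d, e], Δ y = Δ f)
    (hsum : a + b + c + d + e + 1 = 2 * f) :
    ∃ (x : Fin 5 → ℕ) (x0 : ℕ),
      (∀ i, x i ∈ Finset.Icc 1 8) ∧ x0 ∈ Finset.Icc 1 8 ∧
      (∀ i, Δ (x i) = Δ x0) ∧ (∑ i, x i) + 1 = 2 * x0 := by
  refine ⟨![a, b, c, d, e], f, fun i ↦ ?_, hrange f (by simp), fun i ↦ ?_, ?_⟩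
  · fin_cases i <;> exact hrange _ (by simp)
  · fin_cases i <;> exact hcolor _ (by simp)
  · simpa [Fin.sum_univ_five] using hsum

theorem stmt11 (Δ : ℕ → Fin 2) :
    ∃ (x : Fin 5 → ℕ) (x0 : ℕ),
      (∀ i, x i ∈ Finset.Icc 1 8) ∧ x0 ∈ Finset.Icc 1 8 ∧
      (∀ i, Δ (x i) = Δ x0) ∧ (∑ i, x i) + 1 = 2 * x0 := by
  by_cases h13 : Δ 1 = Δ 3
  · exact exists_mono_solution_of_five Δ 1 1 1 1 1 3 (by decide) (by simp [h13]) rfl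
  by_cases h38 : Δ 3 = Δ 8
  · exact exists_mono_solution_of_five Δ 3 3 3 3 3 8 (by decide) (by simp [h38]) rfl
  have h18 : Δ 1 = Δ 8 := fin_two_eq_of_ne_of_ne h13 h38
  by_cases h61 : Δ 6 = Δ 1
  · exact exists_mono_solution_of_five Δ 1 1 1 6 6 8 (by decide) (by simp [h61, h18]) rfl
  by_cases h41 : Δ 4 = Δ 1
  · exact exists_mono_solution_of_five Δ 1 1 1 4 8 8 (by decide) (by simp [h41, h18]) rfl
  by_cases h21 : Δ 2 = Δ 1
  · exact exists_mono_solution_of_five Δ 1 2 2 2 8 8 (by decide) (by simp [h21, h18]) rfl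
  have h63 : Δ 6 = Δ 3 := fin_two_eq_of_ne_of_ne h61 h13
  have h23 : Δ 2 = Δ 3 := fin_two_eq_of_ne_of_ne h21 h13
  exact exists_mono_solution_of_five Δ 2 2 2 2 3 6 (by decide) (by simp [h23, h63]) rfl
end

section
/- Let a > 1 and c > 0 be real numbers. Define the coloring of the real interval [1, c/(a−1)) that colors x red if the unique k ≥ 0 with (c(a^k−1)+a−1)/(a^k(a−1)) ≤ x < (c(a^{k+1}−1)+a−1)/(a^{k+1}(a−1)) is even, and blue if k is odd (with the k=0 interval being [1, (c+a−1)/a)). Then this coloring admits no monochromatic pair x_1, x_0 ∈ [1, c/(a−1)) with x_1 + c = a·x_0. -/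
/-!
With `L k` the left endpoint of `I_k`, the map `x ↦ a x - c` sends `L (k + 1)` to `L k`
(both sides are `c/(a-1) - (c/(a-1) - 1) / a^k`), so it maps `I_(k+1)` into `I_k` and `I_0`
below `1`. Hence if `x₀ ∈ I_l` then `x₁ = a x₀ - c` lies in `I_(l-1)`, or below `1` when `l = 0`:
its color is the other one, or it is not colored at all. Disjointness of the `I_k` needs the
endpoints to increase, which holds because `I_k` nonempty forces `c ≥ a - 1`.
-/

open Set

noncomputable def leftEnd (a c : ℝ) (k : ℕ) : ℝ :=
  (c * (a ^ k - 1) + a - 1) / (a ^ k * (a - 1))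

theorem Monotone.eq_of_mem_Ico_succ {β : Type*} [Preorder β] {f : ℕ → β} (hf : Monotone f)
    {x : β} {k j : ℕ} (hk : x ∈ Ico (f k) (f (k + 1))) (hj : x ∈ Ico (f j) (f (j + 1))) :
    k = j := by
  by_contra hkj
  exact disjoint_left.1 (hf.pairwise_disjoint_on_Ico_succ hkj) (by simpa using hk)
    (by simpa using hj)

namespace leftEnd

variable {a c : ℝ}

theorem zero (ha : a ≠ 1) : leftEnd a c 0 = 1 := by
  simp [leftEnd, sub_ne_zero.2 ha]

theorem succ_sub (ha : 1 < a) (k : ℕ) :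
    leftEnd a c (k + 1) - leftEnd a c k = (c - (a - 1)) / a ^ (k + 1) := by
  have hpow : a ^ k ≠ 0 := (pow_pos (by linarith) k).ne'
  have ha1 : a - 1 ≠ 0 := by linarith
  simp only [leftEnd]
  field_simp
  ring

theorem mul_succ_sub (ha : 1 < a) (k : ℕ) : a * leftEnd a c (k + 1) - c = leftEnd a c k := by
  have hpow : a ^ k ≠ 0 := (pow_pos (by linarith) k).ne'
  have ha1 : a - 1 ≠ 0 := by linarith
  simp only [leftEnd]
  field_simp
  ring

theorem monotone (ha : 1 < a) (hac : a - 1 ≤ c) : Monotone (leftEnd a c) :=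
  monotone_nat_of_le_succ fun k => by
    have hstep : 0 ≤ (c - (a - 1)) / a ^ (k + 1) :=
      div_nonneg (by linarith) (pow_pos (by linarith) _).le
    linarith [succ_sub (c := c) ha k]

theorem sub_one_le_of_lt_succ (ha : 1 < a) {k : ℕ} (h : leftEnd a c k < leftEnd a c (k + 1)) :
    a - 1 ≤ c := by
  by_contra! hca
  have hstep : (c - (a - 1)) / a ^ (k + 1) < 0 :=
    div_neg_of_neg_of_pos (by linarith) (pow_pos (by linarith) _)
  linarith [succ_sub (c := c) ha k]

theorem mul_sub_lt (ha : 1 < a) {k : ℕ} {x : ℝ} (hx : x < leftEnd a c (k + 1)) :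
    a * x - c < leftEnd a c k := by
  rw [← mul_succ_sub ha k]
  gcongr

theorem le_mul_sub (ha : 1 < a) {k : ℕ} {x : ℝ} (hx : leftEnd a c (k + 1) ≤ x) :
    leftEnd a c k ≤ a * x - c := by
  rw [← mul_succ_sub ha k]
  gcongr

end leftEnd

theorem stmt14_general (a c : ℝ) (ha : 1 < a) (k l : ℕ) (x1 x0 : ℝ)
    (hx1 : x1 ∈ Set.Ico ((c * (a ^ k - 1) + a - 1) / (a ^ k * (a - 1)))
        ((c * (a ^ (k + 1) - 1) + a - 1) / (a ^ (k + 1) * (a - 1))))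
    (hx0 : x0 ∈ Set.Ico ((c * (a ^ l - 1) + a - 1) / (a ^ l * (a - 1)))
        ((c * (a ^ (l + 1) - 1) + a - 1) / (a ^ (l + 1) * (a - 1))))
    (hcol : k % 2 = l % 2) :
    x1 + c ≠ a * x0 := by
  intro heq
  obtain rfl : x1 = a * x0 - c := by linarith
  change a * x0 - c ∈ Ico (leftEnd a c k) (leftEnd a c (k + 1)) at hx1
  change x0 ∈ Ico (leftEnd a c l) (leftEnd a c (l + 1)) at hx0
  have hmono := leftEnd.monotone ha (leftEnd.sub_one_le_of_lt_succ ha (hx1.1.trans_lt hx1.2))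
  cases l with
  | zero =>
    have hlt : a * x0 - c < 1 := leftEnd.zero ha.ne' ▸ leftEnd.mul_sub_lt ha hx0.2
    linarith [hx1.1, leftEnd.zero (c := c) ha.ne', hmono (Nat.zero_le k)]
  | succ l =>
    have hkl : k = l :=
      hmono.eq_of_mem_Ico_succ hx1 ⟨leftEnd.le_mul_sub ha hx0.1, leftEnd.mul_sub_lt ha hx0.2⟩
    omega

/-- for real `a > 1`, `c > 0`, the coloring of `[1, c/(a-1))` by
parity of the index `k` of the interval
`I_k = [(c(a^k-1)+a-1)/(a^k(a-1)), (c(a^(k+1))-1)+a-1)/(a^(k+1)(a-1)))`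
admits no monochromatic pair `x_1, x_0` with `x_1 + c = a·x_0`. -/
theorem stmt14 (a c : ℝ) (ha : 1 < a) (hc : 0 < c) (k l : ℕ) (x1 x0 : ℝ)
    (hx1 : x1 ∈ Set.Ico ((c * (a ^ k - 1) + a - 1) / (a ^ k * (a - 1)))
        ((c * (a ^ (k + 1) - 1) + a - 1) / (a ^ (k + 1) * (a - 1))))
    (hx0 : x0 ∈ Set.Ico ((c * (a ^ l - 1) + a - 1) / (a ^ l * (a - 1)))
        ((c * (a ^ (l + 1) - 1) + a - 1) / (a ^ (l + 1) * (a - 1))))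
    (hcol : k % 2 = l % 2) :
    x1 + c ≠ a * x0 :=
  stmt14_general a c ha k l x1 x0 hx1 hx0 hcol
end

section
/- Let a > 1 and c > 0 be real numbers with x_1 ∈ I_k := [(c(a^k−1)+a−1)/(a^k(a−1)), (c(a^{k+1}−1)+a−1)/(a^{k+1}(a−1))). If x_1 + c = a·x_0, then x_0 ∈ I_{k+1}. -/
/-! The endpoints satisfy `e (k+1) = (e k + c) / a`, so the increasing affine map
`x ↦ (x + c) / a`, which sends `x₁` to `x₀`, carries `I_k = [e k, e (k+1))` onto `I_(k+1)`. -/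

/-- The paper's interval is `I_k = [endpoint a c k, endpoint a c (k + 1))`. -/
noncomputable def endpoint (a c : ℝ) (k : ℕ) : ℝ :=
  (c * (a ^ k - 1) + a - 1) / (a ^ k * (a - 1))

theorem endpoint_add_div {a : ℝ} (c : ℝ) (k : ℕ) (ha₀ : a ≠ 0) (ha₁ : a ≠ 1) :
    (endpoint a c k + c) / a = endpoint a c (k + 1) := by
  have : a - 1 ≠ 0 := sub_ne_zero.mpr ha₁
  unfold endpoint
  field_simp
  ring

theorem add_div_mem_Ico {a l u x : ℝ} (c : ℝ) (ha : 0 < a) (hx : x ∈ Set.Ico l u) :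
    (x + c) / a ∈ Set.Ico ((l + c) / a) ((u + c) / a) :=
  ⟨by gcongr; exact hx.1, by gcongr; exact hx.2⟩

theorem stmt15_general (a c : ℝ) (ha : 1 < a) (k : ℕ) (x1 x0 : ℝ)
    (hx1 : x1 ∈ Set.Ico ((c * (a ^ k - 1) + a - 1) / (a ^ k * (a - 1)))
        ((c * (a ^ (k + 1) - 1) + a - 1) / (a ^ (k + 1) * (a - 1))))
    (heq : x1 + c = a * x0) :
    x0 ∈ Set.Ico ((c * (a ^ (k + 1) - 1) + a - 1) / (a ^ (k + 1) * (a - 1)))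
        ((c * (a ^ (k + 2) - 1) + a - 1) / (a ^ (k + 2) * (a - 1))) := by
  have ha₀ : 0 < a := by linarith
  have hx0 : x0 = (x1 + c) / a := by rw [heq, mul_div_cancel_left₀ _ ha₀.ne']
  have hx1' : x1 ∈ Set.Ico (endpoint a c k) (endpoint a c (k + 1)) := hx1
  have hmem := add_div_mem_Ico c ha₀ hx1'
  rwa [endpoint_add_div c _ ha₀.ne' ha.ne', endpoint_add_div c _ ha₀.ne' ha.ne', ← hx0]
    at hmem

/-- for real `a > 1`, `c > 0`, if `x_1 ∈ I_k` and `x_1 + c = a·x_0`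
then `x_0 ∈ I_(k+1)`. -/
theorem stmt15 (a c : ℝ) (ha : 1 < a) (hc : 0 < c) (k : ℕ) (x1 x0 : ℝ)
    (hx1 : x1 ∈ Set.Ico ((c * (a ^ k - 1) + a - 1) / (a ^ k * (a - 1)))
        ((c * (a ^ (k + 1) - 1) + a - 1) / (a ^ (k + 1) * (a - 1))))
    (heq : x1 + c = a * x0) :
    x0 ∈ Set.Ico ((c * (a ^ (k + 1) - 1) + a - 1) / (a ^ (k + 1) * (a - 1)))
        ((c * (a ^ (k + 2) - 1) + a - 1) / (a ^ (k + 2) * (a - 1))) :=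
  stmt15_general a c ha k x1 x0 hx1 heq
end

section
/- Let c > 0 be a real number. Color a real number x ≥ 1 red if the unique integer k ≥ 0 with kc+1 ≤ x < (k+1)c+1 is even, blue otherwise. Then there is no monochromatic pair x_1, x_0 ≥ 1 of the same color with x_1 + c = x_0. Hence the 2-color continuous Rado number for x_1 + c = 1·x_0 is infinite. -/
/-! Adding `c` moves a point exactly one block of the partition to the right, so `x₁ + c` lies
in the block after that of `x₁`, whose index has the other parity. -/

section BlockIndex

variable {K : Type*} [CommSemiring K] [LinearOrder K] [IsStrictOrderedRing K] {c a x : K}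

theorem eq_of_mem_Ico_natCast_mul_add (hc : 0 < c) {k m : ℕ}
    (hk : x ∈ Set.Ico ((k : K) * c + a) (((k : K) + 1) * c + a))
    (hm : x ∈ Set.Ico ((m : K) * c + a) (((m : K) + 1) * c + a)) : k = m := by
  have hkm : (k : K) < m + 1 :=
    lt_of_mul_lt_mul_right (lt_of_add_lt_add_right (hk.1.trans_lt hm.2)) hc.le
  have hmk : (m : K) < k + 1 :=
    lt_of_mul_lt_mul_right (lt_of_add_lt_add_right (hm.1.trans_lt hk.2)) hc.le
  norm_cast at hkm hmk
  omega

theorem add_mem_Ico_natCast_succ_mul_add {k : ℕ}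
    (hk : x ∈ Set.Ico ((k : K) * c + a) (((k : K) + 1) * c + a)) :
    x + c ∈ Set.Ico (((k + 1 : ℕ) : K) * c + a) ((((k + 1 : ℕ) : K) + 1) * c + a) := by
  push_cast
  constructor
  · convert add_le_add_right hk.1 c using 1 <;> ring
  · convert add_lt_add_right hk.2 c using 1 <;> ring

end BlockIndex

/-- for real `c > 0`, coloring `x ≥ 1` by the parity of the unique
`k` with `kc+1 ≤ x < (k+1)c+1`, there is no monochromatic pair with
`x_1 + c = x_0`; hence the continuous Rado number for `x_1 + c = 1·x_0` is
infinite. -/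
theorem stmt16 (c : ℝ) (hc : 0 < c) (k l : ℕ) (x1 x0 : ℝ)
    (hx1 : x1 ∈ Set.Ico ((k : ℝ) * c + 1) (((k : ℝ) + 1) * c + 1))
    (hx0 : x0 ∈ Set.Ico ((l : ℝ) * c + 1) (((l : ℝ) + 1) * c + 1))
    (hcol : k % 2 = l % 2) :
    x1 + c ≠ x0 := by
  rintro rfl
  have hl : k + 1 = l :=
    eq_of_mem_Ico_natCast_mul_add hc (add_mem_Ico_natCast_succ_mul_add hx1) hx0
  omega
end

section
/- Let a > 1 and c > 0 be integers with (a−1) not dividing c. Then there exists a 2-coloring of all positive integers with no monochromatic solution to x_1 + c = a·x_0; i.e., the discrete 2-color Rado number R(1,c,a) is infinite. -/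
/-!
The substitution `u = (a - 1) x - c` turns `x₁ + c = a x₀` into `u₁ = a u₀`, and `u₀ ≠ 0`
because `(a - 1) ∤ c`. Colouring `x` by the parity of `⌊log_a |u|⌋` therefore separates the
two sides of every solution: multiplying by `a` raises this logarithm by exactly one.
-/

def logParity (b : ℕ) (z : ℤ) : Fin 2 := if Even (Nat.log b z.natAbs) then 0 else 1

theorem logParity_mul_ne {b : ℕ} (hb : 1 < b) {z : ℤ} (hz : z ≠ 0) :
    logParity b (b * z) ≠ logParity b z := by
  rw [logParity, logParity, Int.natAbs_mul, Int.natAbs_natCast, mul_comm,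
    Nat.log_mul_base hb (Int.natAbs_ne_zero.mpr hz)]
  by_cases h : Even (Nat.log b z.natAbs) <;> simp [h, Nat.even_add_one]

theorem stmt18_general (a c : ℕ) (ha : 1 < a) (hdvd : ¬ (a - 1) ∣ c) :
    ∃ Δ : ℕ → Fin 2, ∀ x1 x0 : ℕ, 0 < x1 → 0 < x0 → Δ x1 = Δ x0 →
      x1 + c ≠ a * x0 := by
  have hdvd' : ¬ ((a : ℤ) - 1) ∣ c := by
    rwa [← Nat.cast_one, ← Nat.cast_sub ha.le, Int.natCast_dvd_natCast]
  refine ⟨fun x => logParity a (((a : ℤ) - 1) * x - c), fun x1 x0 _ _ hΔ heq => ?_⟩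
  have hne : ((a : ℤ) - 1) * x0 - c ≠ 0 := fun h => hdvd' ⟨x0, by linarith⟩
  have hshift : ((a : ℤ) - 1) * x1 - c = a * (((a : ℤ) - 1) * x0 - c) := by
    have heq' : (x1 : ℤ) + c = a * x0 := by exact_mod_cast heq
    linear_combination ((a : ℤ) - 1) * heq'
  exact logParity_mul_ne ha hne (hshift ▸ hΔ)

/-- for integers `a > 1`, `c > 0` with `(a-1) ∤ c`, there is a
2-coloring of the positive integers with no monochromatic solution to
`x_1 + c = a·x_0`; i.e. `R(1,c,a)` is infinite. -/
theorem stmt18 (a c : ℕ) (ha : 1 < a) (hc : 0 < c) (hdvd : ¬ (a - 1) ∣ c) :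
    ∃ Δ : ℕ → Fin 2, ∀ x1 x0 : ℕ, 0 < x1 → 0 < x0 → Δ x1 = Δ x0 →
      x1 + c ≠ a * x0 :=
  stmt18_general a c ha hdvd
end
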